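/- Let (g_n) be independent standard complex Gaussians and let 1 ≤ q₁ < ∞. Then ‖ max_N N^{1/2} ( Σ_{n ∼ N} |g_n|²/n² )^{1/2} ‖_{L^{q₁}(Ω)} ≤ C √{q₁}, where the maximum is over dyadic integers N = 2^j, and consequently P( max_N N^{1/2}(Σ_{n∼N}|g_n|²/n²)^{1/2} > λ ) ≤ C exp(−cλ^c) for λ ≥ 1. -/

import Mathlib

open MeasureTheory ProbabilityTheory

/-- The standard complex Gaussian measure on `ℂ`, with density `π⁻¹ e^{-|z|²}`:
the real and imaginary parts are independent real Gaussians of variance `1/2`. -/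
noncomputable def stdComplexGaussian : Measure ℂ :=
  ((gaussianReal 0 (1 / 2)).prod (gaussianReal 0 (1 / 2))).map (fun p => ⟨p.1, p.2⟩)

/-- `(g n)` is a sequence of independent standard complex Gaussian random variables. -/
def IsIIDStdComplexGaussian {Ω : Type*} [MeasurableSpace Ω] (P : Measure Ω)
    (g : ℕ → Ω → ℂ) : Prop :=
  iIndepFun g P ∧
    ∀ n, AEMeasurable (g n) P ∧ P.map (g n) = stdComplexGaussian

/-!
Write `Y_j = ∑_{2^j ≤ n < 2^{j+1}} |g_n|²/n²`, so that the maximal function is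
`S = sup_j (2^j Y_j)^{1/2}`. Since `|g|²` is exponentially distributed, `E e^{s|g|²} = (1 - s)⁻¹`,
and a Chernoff bound at parameter `4^j/2` gives `P(2^j Y_j ≥ λ²) ≤ e^{-2^j λ²/4}` for `λ ≥ 2`.
These bounds decay doubly exponentially in `j`, so a union bound yields the Gaussian tail
`P(S > λ) ≲ e^{-λ²/4}`. By the layer-cake formula this tail makes `E e^{S²/8}` finite, and the
pointwise inequality `S^q ≤ (4q)^{q/2} e^{S²/8}` turns it into `‖S‖_{L^q} ≲ √q`.
-/

open Real Set

lemma inv_one_sub_le_exp_two_mul {a : ℝ} (h0 : 0 ≤ a) (h : a ≤ 1 / 2) :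
    (1 - a)⁻¹ ≤ exp (2 * a) := by
  rw [inv_le_iff_one_le_mul₀ (by linarith)]
  nlinarith [add_one_le_exp (2 * a)]

lemma ENNReal.tsum_ofReal_pow_two_pow_le {r : ℝ} (h0 : 0 ≤ r) (h : r ≤ 1 / 2) :
    ∑' j : ℕ, ENNReal.ofReal (r ^ 2 ^ j) ≤ ENNReal.ofReal (2 * r) := by
  calc ∑' j : ℕ, ENNReal.ofReal (r ^ 2 ^ j)
      ≤ ∑' j : ℕ, ENNReal.ofReal r * 2⁻¹ ^ j := by
        refine ENNReal.tsum_le_tsum fun j => ?_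
        rw [← ENNReal.ofReal_ofNat 2, ← ENNReal.ofReal_inv_of_pos two_pos,
          ← ENNReal.ofReal_pow (by norm_num), ← ENNReal.ofReal_mul h0]
        refine ENNReal.ofReal_le_ofReal ?_
        calc r ^ 2 ^ j ≤ r ^ (j + 1) := pow_le_pow_of_le_one h0 (by linarith) Nat.lt_two_pow_self
          _ ≤ r * 2⁻¹ ^ j := by
              rw [pow_succ']
              gcongr
              linarith
    _ = ENNReal.ofReal (2 * r) := by
        rw [ENNReal.tsum_mul_left, ENNReal.tsum_geometric, ENNReal.one_sub_inv_two, inv_inv,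
          ENNReal.ofReal_mul zero_le_two, ENNReal.ofReal_ofNat, mul_comm]

section Moments

variable {Ω : Type*} [MeasurableSpace Ω] {μ : Measure Ω} [IsProbabilityMeasure μ]

lemma lintegral_le_one_add_of_measure_lt_le {Y : Ω → ℝ} (hY : 0 ≤ᵐ[μ] Y)
    (hYm : AEMeasurable Y μ) {K : ℝ}
    (htail : ∀ t > 1, μ {ω | t < Y ω} ≤ ENNReal.ofReal (K / t ^ 2)) :
    ∫⁻ ω, ENNReal.ofReal (Y ω) ∂μ ≤ 1 + ENNReal.ofReal K := by
  rw [lintegral_eq_lintegral_meas_lt μ hY hYm, ← Ioc_union_Ioi_eq_Ioi zero_le_one,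
    lintegral_union measurableSet_Ioi (Ioc_disjoint_Ioi le_rfl)]
  gcongr
  · calc ∫⁻ t in Ioc 0 1, μ {ω | t < Y ω} ≤ ∫⁻ t in Ioc (0 : ℝ) 1, 1 :=
          lintegral_mono fun _ => prob_le_one
      _ = 1 := by simp
  · have hint : ∫ t in Ioi (1 : ℝ), t ^ (-2 : ℝ) = 1 := by
      rw [integral_Ioi_rpow_of_lt (by norm_num) one_pos]
      norm_num
    calc ∫⁻ t in Ioi 1, μ {ω | t < Y ω}
        ≤ ∫⁻ t in Ioi (1 : ℝ), ENNReal.ofReal K * ENNReal.ofReal (t ^ (-2 : ℝ)) := by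
          refine setLIntegral_mono (by fun_prop) fun t ht => ?_
          have ht0 : 0 < t := zero_lt_one.trans ht
          rw [← ENNReal.ofReal_mul' (by positivity), rpow_neg ht0.le, rpow_two, ← div_eq_mul_inv]
          exact htail t ht
      _ = ENNReal.ofReal K := by
          rw [lintegral_const_mul _ (by fun_prop), ← ofReal_integral_eq_lintegral_ofReal
            (integrableOn_Ioi_rpow_of_lt (by norm_num) one_pos)
            (ae_restrict_of_forall_mem measurableSet_Ioi fun t ht =>
              rpow_nonneg (zero_lt_one.trans ht).le _),
            hint, ENNReal.ofReal_one, mul_one]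

lemma lintegral_exp_sq_div_eight_le {S : Ω → ℝ} (hS : ∀ ω, 0 ≤ S ω) (hSm : AEMeasurable S μ)
    {K : ℝ} (htail : ∀ t > 0, μ {ω | t < S ω} ≤ ENNReal.ofReal (K * exp (-t ^ 2 / 4))) :
    ∫⁻ ω, ENNReal.ofReal (exp (S ω ^ 2 / 8)) ∂μ ≤ 1 + ENNReal.ofReal K := by
  refine lintegral_le_one_add_of_measure_lt_le (ae_of_all _ fun ω => (exp_pos _).le)
    (by fun_prop) fun t ht => ?_
  have hlog : 0 < log t := log_pos ht
  have hsub : {ω | t < exp (S ω ^ 2 / 8)} ⊆ {ω | √(8 * log t) < S ω} := fun ω hω => by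
    have : 8 * log t < S ω ^ 2 := by
      have := log_lt_log (zero_lt_one.trans ht) hω
      rw [log_exp] at this
      linarith
    show √(8 * log t) < S ω
    rw [← sqrt_sq (hS ω)]
    exact sqrt_lt_sqrt (by positivity) this
  refine (measure_mono hsub).trans ((htail _ (by positivity)).trans_eq ?_)
  rw [sq_sqrt (by positivity), show -(8 * log t) / 4 = -(2 * log t) by ring, exp_neg,
    show (2 : ℝ) = (2 : ℕ) by norm_num, exp_nat_mul, exp_log (zero_lt_one.trans ht),
    div_eq_mul_inv]

lemma rpow_integral_rpow_le_of_measure_lt_le {S : Ω → ℝ} (hS : ∀ ω, 0 ≤ S ω)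
    (hSm : AEMeasurable S μ) {K : ℝ} (hK : 0 ≤ K)
    (htail : ∀ t > 0, μ {ω | t < S ω} ≤ ENNReal.ofReal (K * exp (-t ^ 2 / 4))) {q : ℝ}
    (hq : 1 ≤ q) : (∫ ω, S ω ^ q ∂μ) ^ (1 / q) ≤ 2 * (1 + K) * √q := by
  have hq0 : 0 < q := zero_lt_one.trans_le hq
  have hpoint : ∀ ω, S ω ^ q ≤ (4 * q) ^ (q / 2) * exp (S ω ^ 2 / 8) := fun ω => by
    have := rpow_abs_le_mul_exp_abs (S ω ^ 2) (p := q / 2) (t := 1 / 8) (by positivity)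
      (by norm_num)
    rw [abs_of_nonneg (by positivity), ← rpow_natCast, ← rpow_mul (hS ω)] at this
    convert this using 2 <;> norm_num <;> ring_nf
  have hmoment : ∫ ω, S ω ^ q ∂μ ≤ (4 * q) ^ (q / 2) * (1 + K) := by
    rw [integral_eq_lintegral_of_nonneg_ae (ae_of_all _ fun ω => rpow_nonneg (hS ω) q)
      (hSm.pow_const q).aestronglyMeasurable]
    refine ENNReal.toReal_le_of_le_ofReal (by positivity) ?_
    calc ∫⁻ ω, ENNReal.ofReal (S ω ^ q) ∂μ
        ≤ ∫⁻ ω, ENNReal.ofReal ((4 * q) ^ (q / 2)) * ENNReal.ofReal (exp (S ω ^ 2 / 8)) ∂μ :=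
          lintegral_mono fun ω => by
            rw [← ENNReal.ofReal_mul (by positivity)]
            exact ENNReal.ofReal_le_ofReal (hpoint ω)
      _ ≤ ENNReal.ofReal ((4 * q) ^ (q / 2)) * (1 + ENNReal.ofReal K) := by
          rw [lintegral_const_mul' _ _ ENNReal.ofReal_ne_top]
          gcongr
          exact lintegral_exp_sq_div_eight_le hS hSm htail
      _ = ENNReal.ofReal ((4 * q) ^ (q / 2) * (1 + K)) := by
          rw [ENNReal.ofReal_mul (by positivity), ENNReal.ofReal_add zero_le_one hK,
            ENNReal.ofReal_one]
  calc (∫ ω, S ω ^ q ∂μ) ^ (1 / q)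
      ≤ ((4 * q) ^ (q / 2) * (1 + K)) ^ (1 / q) :=
        rpow_le_rpow (integral_nonneg fun ω => rpow_nonneg (hS ω) q) hmoment (by positivity)
    _ = 2 * √q * (1 + K) ^ (1 / q) := by
        rw [mul_rpow (by positivity) (by positivity), ← rpow_mul (by positivity),
          show q / 2 * (1 / q) = 1 / 2 by field_simp, ← sqrt_eq_rpow, sqrt_mul zero_le_four,
          show (4 : ℝ) = 2 ^ 2 by norm_num, sqrt_sq zero_le_two]
    _ ≤ 2 * √q * (1 + K) := by
        gcongr
        exact rpow_le_self_of_one_le (by linarith) ((div_le_one hq0).mpr hq)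
    _ = 2 * (1 + K) * √q := by ring

end Moments

section Gaussian

lemma gaussianPDFReal_zero_half_mul_exp (s x : ℝ) :
    gaussianPDFReal 0 (1 / 2) x * exp (s * x ^ 2) = (√π)⁻¹ * exp (-(1 - s) * x ^ 2) := by
  have h : ((1 / 2 : NNReal) : ℝ) = 1 / 2 := by norm_num
  simp only [gaussianPDFReal, h, mul_assoc, ← exp_add]
  congr 3 <;> ring

lemma integrable_exp_mul_sq_gaussianReal_half {s : ℝ} (hs : s < 1) :
    Integrable (fun x => exp (s * x ^ 2)) (gaussianReal 0 (1 / 2)) := by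
  rw [gaussianReal_of_var_ne_zero _ (by norm_num), integrable_withDensity_iff_integrable_smul'
    (measurable_gaussianPDF _ _) (ae_of_all _ fun _ => gaussianPDF_lt_top)]
  simp only [toReal_gaussianPDF, smul_eq_mul, gaussianPDFReal_zero_half_mul_exp]
  exact (integrable_exp_neg_mul_sq (by linarith)).const_mul _

lemma integral_exp_mul_sq_gaussianReal_half (s : ℝ) :
    ∫ x, exp (s * x ^ 2) ∂gaussianReal 0 (1 / 2) = (√(1 - s))⁻¹ := by
  rw [integral_gaussianReal_eq_integral_smul (by norm_num)]
  simp only [smul_eq_mul, gaussianPDFReal_zero_half_mul_exp]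
  rw [integral_const_mul, integral_gaussian, sqrt_div pi_nonneg, div_eq_mul_inv, ← mul_assoc,
    inv_mul_cancel₀ (by positivity), one_mul]

lemma measurable_complex_mk : Measurable (fun p : ℝ × ℝ => (⟨p.1, p.2⟩ : ℂ)) :=
  Complex.measurableEquivRealProd.symm.measurable

lemma exp_mul_sq_norm_complex_mk (s : ℝ) (p : ℝ × ℝ) :
    exp (s * ‖(⟨p.1, p.2⟩ : ℂ)‖ ^ 2) = exp (s * p.1 ^ 2) * exp (s * p.2 ^ 2) := by
  rw [Complex.sq_norm, Complex.normSq_mk, ← exp_add]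
  ring_nf

lemma integrable_exp_mul_sq_norm_stdComplexGaussian {s : ℝ} (hs : s < 1) :
    Integrable (fun z : ℂ => exp (s * ‖z‖ ^ 2)) stdComplexGaussian := by
  rw [stdComplexGaussian, integrable_map_measure (by fun_prop) measurable_complex_mk.aemeasurable]
  simp only [Function.comp_def, exp_mul_sq_norm_complex_mk]
  exact (integrable_exp_mul_sq_gaussianReal_half hs).mul_prod
    (integrable_exp_mul_sq_gaussianReal_half hs)

lemma integral_exp_mul_sq_norm_stdComplexGaussian {s : ℝ} (hs : s < 1) :
    ∫ z, exp (s * ‖z‖ ^ 2) ∂stdComplexGaussian = (1 - s)⁻¹ := by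
  rw [stdComplexGaussian, integral_map measurable_complex_mk.aemeasurable (by fun_prop)]
  simp only [exp_mul_sq_norm_complex_mk]
  rw [integral_prod_mul (fun x => exp (s * x ^ 2)) (fun x => exp (s * x ^ 2)),
    integral_exp_mul_sq_gaussianReal_half, ← mul_inv, mul_self_sqrt (by linarith)]

end Gaussian

section Chernoff

variable {Ω : Type*} [MeasurableSpace Ω] {P : Measure Ω}

lemma ProbabilityTheory.HasLaw.integrable_exp_mul_sq_norm {X : Ω → ℂ}
    (hX : HasLaw X stdComplexGaussian P) {s : ℝ} (hs : s < 1) :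
    Integrable (fun ω => exp (s * ‖X ω‖ ^ 2)) P := by
  have h := integrable_exp_mul_sq_norm_stdComplexGaussian hs
  rwa [← hX.map_eq, integrable_map_measure (by fun_prop) hX.aemeasurable] at h

lemma ProbabilityTheory.HasLaw.mgf_sq_norm {X : Ω → ℂ} (hX : HasLaw X stdComplexGaussian P)
    {s : ℝ} (hs : s < 1) : mgf (fun ω => ‖X ω‖ ^ 2) P s = (1 - s)⁻¹ := by
  rw [← integral_exp_mul_sq_norm_stdComplexGaussian hs, mgf, ← hX.integral_comp (by fun_prop)]
  simp only [Function.comp_def]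

lemma ProbabilityTheory.iIndepFun.integrable_exp_mul_sum₀ {ι : Type*} {X : ι → Ω → ℝ}
    (h_indep : iIndepFun X P) (h_meas : ∀ i, AEMeasurable (X i) P) {s : Finset ι} {t : ℝ}
    (h_int : ∀ i ∈ s, Integrable (fun ω => exp (t * X i ω)) P) :
    Integrable (fun ω => exp (t * (∑ i ∈ s, X i) ω)) P := by
  have := h_indep.isProbabilityMeasure
  have hX : ∀ i, X i =ᵐ[P] (h_meas i).mk := fun i => (h_meas i).ae_eq_mk
  refine ((h_indep.congr hX).integrable_exp_mul_sum (t := t) (s := s)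
    (fun i => (h_meas i).measurable_mk) fun i hi => (h_int i hi).congr ?_).congr ?_
  · filter_upwards [hX i] with ω hω
    rw [hω]
  · filter_upwards [(Filter.eventually_all_finset s).mpr fun i _ => hX i] with ω hω
    simp only [Finset.sum_apply]
    rw [Finset.sum_congr rfl hω]

lemma measureReal_sum_mul_sq_norm_ge_le {ι : Type*} {g : ι → Ω → ℂ} (hind : iIndepFun g P)
    (hlaw : ∀ i, HasLaw (g i) stdComplexGaussian P) (s : Finset ι) {c : ι → ℝ} {t : ℝ}
    (ht : 0 ≤ t) (hc : ∀ i ∈ s, 0 ≤ t * c i ∧ t * c i ≤ 1 / 2) (x : ℝ) :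
    P.real {ω | x ≤ ∑ i ∈ s, c i * ‖g i ω‖ ^ 2} ≤ exp (-t * x + 2 * t * ∑ i ∈ s, c i) := by
  set X : ι → Ω → ℝ := fun i ω => c i * ‖g i ω‖ ^ 2 with hX_def
  have hX_indep : iIndepFun X P := hind.comp (fun i z => c i * ‖z‖ ^ 2) fun i => by fun_prop
  have hX_meas : ∀ i, AEMeasurable (X i) P := fun i => by
    have := (hlaw i).aemeasurable
    fun_prop
  have hct : ∀ i ∈ s, c i * t < 1 := fun i hi => by linarith [hc i hi]
  have hX_mgf : ∀ i ∈ s, mgf (X i) P t = (1 - t * c i)⁻¹ := fun i hi => by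
    rw [hX_def, mgf_const_mul, (hlaw i).mgf_sq_norm (hct i hi), mul_comm]
  have hX_int : ∀ i ∈ s, Integrable (fun ω => exp (t * X i ω)) P := fun i hi => by
    simp only [hX_def, ← mul_assoc, mul_comm t (c i)]
    exact (hlaw i).integrable_exp_mul_sq_norm (hct i hi)
  have := hind.isProbabilityMeasure
  calc P.real {ω | x ≤ ∑ i ∈ s, c i * ‖g i ω‖ ^ 2}
      = P.real {ω | x ≤ (∑ i ∈ s, X i) ω} := by simp only [hX_def, Finset.sum_apply]
    _ ≤ exp (-t * x) * mgf (∑ i ∈ s, X i) P t :=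
      measure_ge_le_exp_mul_mgf x ht (hX_indep.integrable_exp_mul_sum₀ hX_meas hX_int)
    _ = exp (-t * x) * ∏ i ∈ s, (1 - t * c i)⁻¹ := by
      rw [hX_indep.mgf_sum₀ hX_meas, Finset.prod_congr rfl hX_mgf]
    _ ≤ exp (-t * x) * ∏ i ∈ s, exp (2 * (t * c i)) := by
      refine mul_le_mul_of_nonneg_left (Finset.prod_le_prod (fun i hi => ?_) fun i hi => ?_)
        (exp_pos _).le
      · exact inv_nonneg.mpr (by linarith [hc i hi])
      · exact inv_one_sub_le_exp_two_mul (hc i hi).1 (hc i hi).2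
    _ = exp (-t * x + 2 * t * ∑ i ∈ s, c i) := by
      rw [← exp_sum, ← exp_add, Finset.mul_sum]
      simp only [mul_assoc]

end Chernoff

section Dyadic

variable {Ω : Type*}

noncomputable def dyadicBlock (g : ℕ → Ω → ℂ) (j : ℕ) (ω : Ω) : ℝ :=
  ∑ n ∈ Finset.Ico (2 ^ j) (2 ^ (j + 1)), ‖g n ω‖ ^ 2 / (n : ℝ) ^ 2

noncomputable def dyadicMaximal (g : ℕ → Ω → ℂ) (ω : Ω) : ℝ :=
  ⨆ j : ℕ, ((2 : ℝ) ^ j) ^ ((1 : ℝ) / 2) * dyadicBlock g j ω ^ ((1 : ℝ) / 2)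

lemma dyadicBlock_nonneg (g : ℕ → Ω → ℂ) (j : ℕ) (ω : Ω) : 0 ≤ dyadicBlock g j ω :=
  Finset.sum_nonneg fun _ _ => by positivity

lemma dyadicMaximal_nonneg (g : ℕ → Ω → ℂ) (ω : Ω) : 0 ≤ dyadicMaximal g ω :=
  Real.iSup_nonneg fun j => mul_nonneg (by positivity) (rpow_nonneg (dyadicBlock_nonneg g j ω) _)

lemma dyadicMaximal_le {g : ℕ → Ω → ℂ} {ω : Ω} {lam : ℝ} (hlam : 0 ≤ lam)
    (h : ∀ j, dyadicBlock g j ω ≤ lam ^ 2 / 2 ^ j) : dyadicMaximal g ω ≤ lam := by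
  refine ciSup_le fun j => ?_
  rw [← sqrt_eq_rpow, ← sqrt_eq_rpow, ← sqrt_mul (by positivity), ← sqrt_sq hlam]
  exact sqrt_le_sqrt ((le_div_iff₀' (by positivity)).mp (h j))

lemma two_pow_le_of_mem_Ico {j n : ℕ} (hn : n ∈ Finset.Ico (2 ^ j) (2 ^ (j + 1))) :
    (2 : ℝ) ^ j ≤ n := by
  exact_mod_cast (Finset.mem_Ico.mp hn).1

lemma sum_Ico_two_pow_inv_sq_le (j : ℕ) :
    ∑ n ∈ Finset.Ico (2 ^ j : ℕ) (2 ^ (j + 1)), ((n : ℝ) ^ 2)⁻¹ ≤ ((2 : ℝ) ^ j)⁻¹ := by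
  have hterm : ∀ n ∈ Finset.Ico (2 ^ j : ℕ) (2 ^ (j + 1)),
      ((n : ℝ) ^ 2)⁻¹ ≤ (((2 : ℝ) ^ j) ^ 2)⁻¹ := fun n hn => by
    have := two_pow_le_of_mem_Ico hn
    gcongr
  refine (Finset.sum_le_card_nsmul _ _ _ hterm).trans_eq ?_
  rw [Nat.card_Ico, show 2 ^ (j + 1) - 2 ^ j = 2 ^ j by rw [pow_succ]; omega, nsmul_eq_mul]
  push_cast
  field_simp

variable [MeasurableSpace Ω] {P : Measure Ω} {g : ℕ → Ω → ℂ}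

lemma IsIIDStdComplexGaussian.hasLaw (hg : IsIIDStdComplexGaussian P g) (n : ℕ) :
    HasLaw (g n) stdComplexGaussian P :=
  ⟨(hg.2 n).1, (hg.2 n).2⟩

lemma aemeasurable_dyadicMaximal (hg : IsIIDStdComplexGaussian P g) :
    AEMeasurable (dyadicMaximal g) P := by
  refine AEMeasurable.iSup fun j => ?_
  have := fun n => (hg.2 n).1
  unfold dyadicBlock
  fun_prop

lemma measure_le_dyadicBlock_le (hg : IsIIDStdComplexGaussian P g) (j : ℕ) {lam : ℝ}
    (hlam : 2 ≤ lam) :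
    P {ω | lam ^ 2 / 2 ^ j ≤ dyadicBlock g j ω} ≤ ENNReal.ofReal (exp (-lam ^ 2 / 4) ^ 2 ^ j) := by
  have := hg.1.isProbabilityMeasure
  have h2j : (0 : ℝ) < 2 ^ j := by positivity
  set t : ℝ := (2 ^ j) ^ 2 / 2 with ht
  have hc : ∀ n ∈ Finset.Ico (2 ^ j : ℕ) (2 ^ (j + 1)),
      0 ≤ t * ((n : ℝ) ^ 2)⁻¹ ∧ t * ((n : ℝ) ^ 2)⁻¹ ≤ 1 / 2 := fun n hn => by
    have hjn := two_pow_le_of_mem_Ico hn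
    refine ⟨by positivity, ?_⟩
    rw [← div_eq_mul_inv, ht, div_div, div_le_div_iff₀ (by nlinarith) two_pos]
    nlinarith [mul_le_mul hjn hjn h2j.le (h2j.le.trans hjn)]
  have hexponent : -t * (lam ^ 2 / 2 ^ j) + 2 * t * ∑ n ∈ Finset.Ico (2 ^ j : ℕ) (2 ^ (j + 1)),
      ((n : ℝ) ^ 2)⁻¹ ≤ 2 ^ j * (-lam ^ 2 / 4) := by
    have hsum := mul_le_mul_of_nonneg_left (sum_Ico_two_pow_inv_sq_le j) (by positivity : 0 ≤ 2 * t)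
    have hlam2 := mul_le_mul_of_nonneg_left (by nlinarith : (4 : ℝ) ≤ lam ^ 2) h2j.le
    rw [ht] at hsum ⊢
    field_simp at hsum ⊢
    nlinarith
  have hchernoff := measureReal_sum_mul_sq_norm_ge_le hg.1 hg.hasLaw _ (by positivity) hc
    (lam ^ 2 / 2 ^ j)
  simp only [← div_eq_inv_mul] at hchernoff
  rw [← ofReal_measureReal, ← exp_nat_mul]
  push_cast
  exact ENNReal.ofReal_le_ofReal (hchernoff.trans (exp_le_exp.mpr hexponent))

lemma measure_lt_dyadicMaximal_le_of_two_le (hg : IsIIDStdComplexGaussian P g) {lam : ℝ}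
    (hlam : 2 ≤ lam) :
    P {ω | lam < dyadicMaximal g ω} ≤ ENNReal.ofReal (2 * exp (-lam ^ 2 / 4)) := by
  have hsub : {ω | lam < dyadicMaximal g ω} ⊆ ⋃ j, {ω | lam ^ 2 / 2 ^ j ≤ dyadicBlock g j ω} := by
    intro ω hω
    by_contra hnot
    simp only [mem_iUnion, mem_ofPred_eq, not_exists, not_le] at hnot
    exact (dyadicMaximal_le (by linarith) fun j => (hnot j).le).not_gt hω
  have hr : exp (-lam ^ 2 / 4) ≤ 1 / 2 :=
    (exp_le_exp.mpr (by nlinarith)).trans exp_neg_one_lt_half.le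
  calc P {ω | lam < dyadicMaximal g ω}
      ≤ ∑' j, P {ω | lam ^ 2 / 2 ^ j ≤ dyadicBlock g j ω} :=
        (measure_mono hsub).trans (measure_iUnion_le _)
    _ ≤ ∑' j : ℕ, ENNReal.ofReal (exp (-lam ^ 2 / 4) ^ 2 ^ j) :=
        ENNReal.tsum_le_tsum fun j => measure_le_dyadicBlock_le hg j hlam
    _ ≤ ENNReal.ofReal (2 * exp (-lam ^ 2 / 4)) :=
        ENNReal.tsum_ofReal_pow_two_pow_le (exp_pos _).le hr

lemma measure_lt_dyadicMaximal_le (hg : IsIIDStdComplexGaussian P g) {lam : ℝ} (hlam : 0 ≤ lam) :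
    P {ω | lam < dyadicMaximal g ω} ≤ ENNReal.ofReal (6 * exp (-lam ^ 2 / 4)) := by
  have := hg.1.isProbabilityMeasure
  rcases le_or_gt 2 lam with h2 | h2
  · exact (measure_lt_dyadicMaximal_le_of_two_le hg h2).trans
      (ENNReal.ofReal_le_ofReal (by linarith [exp_pos (-lam ^ 2 / 4)]))
  · have : exp (-1) ≤ exp (-lam ^ 2 / 4) := exp_le_exp.mpr (by nlinarith)
    refine prob_le_one.trans ?_
    rw [← ENNReal.ofReal_one]
    exact ENNReal.ofReal_le_ofReal (by linarith [exp_neg_one_gt_d9])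

end Dyadic

/-- Dyadic maximal bound for Gaussian blocks: with `(g_n)` IID standard complex Gaussians,
`‖max_N N^{1/2}(Σ_{n∼N}|g_n|²/n²)^{1/2}‖_{L^{q₁}} ≤ C √q₁` for every `1 ≤ q₁ < ∞`, where
the maximum is over dyadic `N = 2^j`, and consequently
`P(max_N N^{1/2}(Σ_{n∼N}|g_n|²/n²)^{1/2} > λ) ≤ C exp(−cλ^c)` for `λ ≥ 1`. -/
theorem dyadic_gaussian_maximal_bound :
    ∃ C > 0, ∃ c > 0, ∀ {Ω : Type} [MeasurableSpace Ω] (P : Measure Ω), IsProbabilityMeasure P →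
      ∀ (g : ℕ → Ω → ℂ), IsIIDStdComplexGaussian P g →
      (∀ q₁ : ℝ, 1 ≤ q₁ →
        (∫ ω, (⨆ j : ℕ, ((2 : ℝ) ^ j) ^ ((1 : ℝ) / 2) *
            (∑ n ∈ Finset.Ico (2 ^ j) (2 ^ (j + 1)), ‖g n ω‖ ^ 2 / (n : ℝ) ^ 2)
              ^ ((1 : ℝ) / 2)) ^ q₁ ∂P) ^ (1 / q₁) ≤ C * Real.sqrt q₁) ∧
      (∀ lam : ℝ, 1 ≤ lam →
        (P {ω | lam < ⨆ j : ℕ, ((2 : ℝ) ^ j) ^ ((1 : ℝ) / 2) *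
            (∑ n ∈ Finset.Ico (2 ^ j) (2 ^ (j + 1)), ‖g n ω‖ ^ 2 / (n : ℝ) ^ 2)
              ^ ((1 : ℝ) / 2)}).toReal ≤ C * Real.exp (-c * lam ^ c)) := by
  refine ⟨14, by norm_num, 1 / 4, by norm_num, fun P _ g hg => ⟨fun q hq => ?_, fun lam hlam => ?_⟩⟩
  · have htail : ∀ t > 0, P {ω | t < dyadicMaximal g ω} ≤ ENNReal.ofReal (6 * exp (-t ^ 2 / 4)) :=
      fun t ht => measure_lt_dyadicMaximal_le hg ht.le
    have h := rpow_integral_rpow_le_of_measure_lt_le (dyadicMaximal_nonneg g)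
      (aemeasurable_dyadicMaximal hg) (by norm_num) htail hq
    rwa [show (2 : ℝ) * (1 + 6) = 14 by norm_num] at h
  · have hpow : lam ^ (1 / 4 : ℝ) ≤ lam ^ 2 := by
      rw [← rpow_two]
      exact rpow_le_rpow_of_exponent_le hlam (by norm_num)
    calc (P {ω | lam < dyadicMaximal g ω}).toReal ≤ 6 * exp (-lam ^ 2 / 4) :=
          ENNReal.toReal_le_of_le_ofReal (by positivity)
            (measure_lt_dyadicMaximal_le hg (by linarith))
      _ ≤ 14 * exp (-(1 / 4) * lam ^ (1 / 4 : ℝ)) := by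
          gcongr
          · norm_num
          · linarith
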